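/- arXiv:2405.13363 — 4 statements merged into one kernel-verified Lean document; each statement's English description precedes it below -/
import Mathlib

section
/- If D is a simple digraph in which every vertex has indegree at most 2 and outdegree at most 2, then every vertex of the competition-common enemy graph of D has degree at most 2; hence every connected component of CCE(D) is a path or a cycle. -/
open SimpleGraph

/-- A simple digraph given by its arc relation `A` has no loops, and every vertex has
outdegree at most 2 and indegree at most 2. -/
def IsTwoTwo {V : Type*} (A : V → V → Prop) : Prop :=
  (∀ v, ¬ A v v) ∧
  (∀ v a b c, A v a → A v b → A v c → a = b ∨ a = c ∨ b = c) ∧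
  (∀ v a b c, A a v → A b v → A c v → a = b ∨ a = c ∨ b = c)

/-- The competition-common enemy graph of a digraph with arc relation `A`. -/
def CCE {V : Type*} (A : V → V → Prop) : SimpleGraph V where
  Adj u v := u ≠ v ∧ (∃ x, A u x ∧ A v x) ∧ (∃ y, A y u ∧ A y v)
  symm := by
    constructor
    rintro u v ⟨h, ⟨x, hx1, hx2⟩, ⟨y, hy1, hy2⟩⟩
    exact ⟨h.symm, ⟨x, hx2, hx1⟩, ⟨y, hy2, hy1⟩⟩
  loopless := ⟨fun v h => h.1 rfl⟩

/-- The connected component `c` of `G` induces a (finite) path graph. -/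
def IsPathComponent {V : Type*} (G : SimpleGraph V) (c : G.ConnectedComponent) : Prop :=
  ∃ n : ℕ, Nonempty ((G.induce c.supp) ≃g pathGraph n)

/-- The connected component `c` of `G` induces a cycle of length at least 3. -/
def IsCycleComponent {V : Type*} (G : SimpleGraph V) (c : G.ConnectedComponent) : Prop :=
  ∃ n : ℕ, 3 ≤ n ∧ Nonempty ((G.induce c.supp) ≃g cycleGraph n)

/-- `G` is the CCE graph of some `⟨2,2⟩` digraph. -/
def IsTwoTwoCCE {V : Type*} (G : SimpleGraph V) : Prop :=
  ∃ (W : Type) (A : W → W → Prop), IsTwoTwo A ∧ Nonempty (G ≃g CCE A)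

/-- `A` is acyclic: it has no directed cycle. -/
def DigraphAcyclic {V : Type*} (A : V → V → Prop) : Prop :=
  ∀ v, ¬ Relation.TransGen A v v

/-- A `(2,2)` digraph: an acyclic `⟨2,2⟩` digraph. -/
def IsTwoTwoAcyclic {V : Type*} (A : V → V → Prop) : Prop :=
  IsTwoTwo A ∧ DigraphAcyclic A

/-- `G` is an interval graph. -/
def IsIntervalGraph {V : Type*} (G : SimpleGraph V) : Prop :=
  ∃ f : V → Set ℝ, (∀ v, ∃ a b : ℝ, f v = Set.Icc a b) ∧
    ∀ u v, u ≠ v → (G.Adj u v ↔ (f u ∩ f v).Nonempty)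

/-- `A` is a minimal `(2,2)` digraph realizing its CCE graph: no proper subdigraph on the
same vertex set has the same CCE graph. -/
def MinimalTwoTwoAcyclic {V : Type*} (A : V → V → Prop) : Prop :=
  IsTwoTwoAcyclic A ∧
    ∀ A' : V → V → Prop, (∀ u v, A' u v → A u v) → CCE A' = CCE A → ∀ u v, A u v → A' u v

/-! Each CCE-neighbour of `v` shares with `v` one of the at most two out-neighbours of `v`, and
each of those has at most one in-neighbour other than `v`, so `CCE A` has maximum degree two.
In a finite connected graph of maximum degree two a longest path visits every vertex, and its only
possible chord joins its two ends; hence the graph is a path or a cycle. -/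

lemma Fin.val_sub_eq_one_iff {n : ℕ} (hn : 2 ≤ n) (a b : Fin n) :
    (a - b).val = 1 ↔ a.val = b.val + 1 ∨ (a.val = 0 ∧ b.val + 1 = n) := by
  have := a.isLt
  have := b.isLt
  rcases le_or_gt b a with h | h
  · rw [Fin.coe_sub_iff_le.2 h]; omega
  · rw [Fin.coe_sub_iff_lt.2 h]; omega

namespace SimpleGraph

variable {V W : Type*} {G : SimpleGraph V}

def DegreeLeTwo (G : SimpleGraph V) : Prop :=
  ∀ v a b c, G.Adj v a → G.Adj v b → G.Adj v c → a = b ∨ a = c ∨ b = c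

lemma DegreeLeTwo.of_embedding {H : SimpleGraph W} (hG : G.DegreeLeTwo) (f : H ↪g G) :
    H.DegreeLeTwo := by
  intro v a b c ha hb hc
  simpa only [f.injective.eq_iff] using
    hG (f v) (f a) (f b) (f c) (f.map_adj_iff.2 ha) (f.map_adj_iff.2 hb) (f.map_adj_iff.2 hc)

lemma DegreeLeTwo.induce (hG : G.DegreeLeTwo) (s : Set V) : (G.induce s).DegreeLeTwo :=
  hG.of_embedding (Embedding.induce s)

namespace Walk

variable {u v : V} {p : G.Walk u v}

lemma IsPath.adj_getVert_of_pos_of_lt (hG : G.DegreeLeTwo) (hp : p.IsPath) {k : ℕ} {x : V}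
    (hk₀ : 0 < k) (hk : k < p.length) (hx : G.Adj (p.getVert k) x) :
    x = p.getVert (k - 1) ∨ x = p.getVert (k + 1) := by
  have hprev : G.Adj (p.getVert k) (p.getVert (k - 1)) := by
    simpa [Nat.sub_add_cancel hk₀] using (p.adj_getVert_succ (i := k - 1) (by omega)).symm
  rcases hG _ _ _ _ hprev (p.adj_getVert_succ hk) hx with h | h | h
  · have := hp.getVert_injOn (show k - 1 ≤ p.length by omega)
      (show k + 1 ≤ p.length by omega) h
    omega
  · exact Or.inl h.symm
  · exact Or.inr h.symm

lemma IsPath.eq_succ_or_of_adj_getVert (hG : G.DegreeLeTwo) (hp : p.IsPath) {i j : ℕ}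
    (hij : i < j) (hj : j ≤ p.length) (hadj : G.Adj (p.getVert i) (p.getVert j)) :
    j = i + 1 ∨ (i = 0 ∧ j = p.length) := by
  have inj : ∀ {a b}, a ≤ p.length → b ≤ p.length → p.getVert a = p.getVert b → a = b :=
    fun ha hb h => hp.getVert_injOn ha hb h
  rcases Nat.eq_zero_or_pos i with rfl | hi
  · rcases hj.lt_or_eq with hj | rfl
    · rcases hp.adj_getVert_of_pos_of_lt hG hij hj hadj.symm with h | h
      · have := inj (by omega) (by omega) h; omega
      · have := inj (by omega) (by omega) h; omega
    · exact Or.inr ⟨rfl, rfl⟩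
  · rcases hp.adj_getVert_of_pos_of_lt hG hi (by omega) hadj with h | h
    · have := inj hj (by omega) h; omega
    · exact Or.inl (inj hj (by omega) h)

lemma IsPath.adj_getVert_iff (hG : G.DegreeLeTwo) (hp : p.IsPath) {i j : ℕ}
    (hi : i ≤ p.length) (hj : j ≤ p.length) :
    G.Adj (p.getVert i) (p.getVert j) ↔
      i + 1 = j ∨ j + 1 = i ∨ (G.Adj u v ∧ (i = 0 ∧ j = p.length ∨ i = p.length ∧ j = 0)) := by
  constructor
  · intro hadj
    rcases lt_trichotomy i j with h | rfl | h
    · rcases hp.eq_succ_or_of_adj_getVert hG h hj hadj with h' | ⟨rfl, rfl⟩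
      · omega
      · exact Or.inr (Or.inr ⟨by simpa using hadj, Or.inl ⟨rfl, rfl⟩⟩)
    · exact absurd rfl hadj.ne
    · rcases hp.eq_succ_or_of_adj_getVert hG h hi hadj.symm with h' | ⟨rfl, rfl⟩
      · omega
      · exact Or.inr (Or.inr ⟨by simpa using hadj.symm, Or.inr ⟨rfl, rfl⟩⟩)
  · rintro (rfl | rfl | ⟨huv, ⟨rfl, rfl⟩ | ⟨rfl, rfl⟩⟩)
    · exact p.adj_getVert_succ (by omega)
    · exact (p.adj_getVert_succ (by omega)).symm
    · simpa using huv
    · simpa using huv.symm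

def IsLongestPath (p : G.Walk u v) : Prop :=
  p.IsPath ∧ ∀ ⦃a b : V⦄ (q : G.Walk a b), q.IsPath → q.length ≤ p.length

lemma IsLongestPath.reverse (hp : p.IsLongestPath) : p.reverse.IsLongestPath :=
  ⟨hp.1.reverse, by simpa using hp.2⟩

lemma IsLongestPath.mem_support_of_adj_start (hp : p.IsLongestPath) {x : V} (hx : G.Adj u x) :
    x ∈ p.support := by
  by_contra hx'
  simpa using hp.2 (cons hx.symm p) (hp.1.cons hx')

lemma IsLongestPath.mem_support_of_adj (hG : G.DegreeLeTwo) (hp : p.IsLongestPath) {x y : V}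
    (hy : y ∈ p.support) (hx : G.Adj y x) : x ∈ p.support := by
  obtain ⟨k, rfl, hk⟩ := mem_support_iff_exists_getVert.1 hy
  rcases Nat.eq_zero_or_pos k with rfl | hk₀
  · exact hp.mem_support_of_adj_start (by simpa using hx)
  rcases hk.lt_or_eq with hk | rfl
  · rcases hp.1.adj_getVert_of_pos_of_lt hG hk₀ hk hx with rfl | rfl <;>
      exact p.getVert_mem_support _
  · simpa using hp.reverse.mem_support_of_adj_start (by simpa using hx)

lemma IsLongestPath.mem_support (hG : G.DegreeLeTwo) (hconn : G.Preconnected)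
    (hp : p.IsLongestPath) (w : V) : w ∈ p.support := by
  by_contra hw
  obtain ⟨d, -, hd, hd'⟩ :=
    (hconn u w).some.exists_boundary_dart {x | x ∈ p.support} p.start_mem_support hw
  exact hd' (hp.mem_support_of_adj hG hd d.adj)

noncomputable def IsPath.getVertEquiv (hp : p.IsPath) (hspan : ∀ w, w ∈ p.support) :
    Fin (p.length + 1) ≃ V :=
  Equiv.ofBijective (fun i => p.getVert i)
    ⟨fun i j h => Fin.ext (hp.getVert_injOn i.is_le j.is_le h), fun w =>
      let ⟨k, hk, hk_le⟩ := mem_support_iff_exists_getVert.1 (hspan w)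
      ⟨⟨k, by omega⟩, hk⟩⟩

noncomputable def IsPath.isoOfAdjIff (hp : p.IsPath) (hspan : ∀ w, w ∈ p.support)
    (H : SimpleGraph (Fin (p.length + 1)))
    (hH : ∀ a b : Fin (p.length + 1), H.Adj a b ↔ G.Adj (p.getVert a) (p.getVert b)) :
    H ≃g G :=
  ⟨hp.getVertEquiv hspan, (hH _ _).symm⟩

end Walk

lemma exists_isLongestPath [Finite V] [Nonempty V] (G : SimpleGraph V) :
    ∃ (u v : V) (p : G.Walk u v), p.IsLongestPath := by
  have := Fintype.ofFinite V
  let S : Set ℕ := {n | ∃ (u v : V) (p : G.Walk u v), p.IsPath ∧ p.length = n}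
  have hbdd : BddAbove S :=
    ⟨Fintype.card V, by rintro _ ⟨_, _, q, hq, rfl⟩; exact hq.length_lt.le⟩
  obtain ⟨u, v, p, hp, hlen⟩ :=
    Nat.sSup_mem (s := S) ⟨0, _, _, (.nil : G.Walk (Classical.arbitrary V) _), .nil, rfl⟩ hbdd
  exact ⟨u, v, p, hp, fun a b q hq => hlen ▸ le_csSup hbdd ⟨a, b, q, hq, rfl⟩⟩

theorem DegreeLeTwo.exists_iso_pathGraph_or_cycleGraph [Finite V] (hG : G.DegreeLeTwo)
    (hconn : G.Connected) :
    (∃ n, Nonempty (G ≃g pathGraph n)) ∨ ∃ n, 3 ≤ n ∧ Nonempty (G ≃g cycleGraph n) := by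
  have := hconn.nonempty
  obtain ⟨u, v, p, hp⟩ := G.exists_isLongestPath
  have hspan := hp.mem_support hG hconn.preconnected
  have hadj (a b : Fin (p.length + 1)) :=
    hp.1.adj_getVert_iff hG (i := a) (j := b) (by omega) (by omega)
  by_cases hcyc : 2 ≤ p.length ∧ G.Adj u v
  · refine Or.inr ⟨p.length + 1, by omega,
      ⟨(hp.1.isoOfAdjIff hspan _ fun a b => ?_).symm⟩⟩
    rw [hadj, cycleGraph_adj', Fin.val_sub_eq_one_iff (by omega),
      Fin.val_sub_eq_one_iff (by omega)]
    simp only [hcyc.2, true_and]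
    omega
  · have hlen : G.Adj u v → p.length = 1 := fun huv => by
      have : p.length ≠ 0 := fun h => huv.ne (p.eq_of_length_eq_zero h)
      have : ¬2 ≤ p.length := fun h => hcyc ⟨h, huv⟩
      omega
    refine Or.inl ⟨p.length + 1, ⟨(hp.1.isoOfAdjIff hspan _ fun a b => ?_).symm⟩⟩
    rw [hadj, pathGraph_adj]
    by_cases huv : G.Adj u v
    · simp only [huv, true_and, hlen huv]
      omega
    · simp only [huv, false_and, or_false]

end SimpleGraph

lemma IsTwoTwo.eq_of_common_outNeighbor {V : Type*} {A : V → V → Prop} (hA : IsTwoTwo A)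
    {v a b x : V} (hv : A v x) (ha : A a x) (hb : A b x) (hav : a ≠ v) (hbv : b ≠ v) :
    a = b := by
  rcases hA.2.2 x a b v ha hb hv with h | h | h
  · exact h
  · exact absurd h hav
  · exact absurd h hbv

lemma IsTwoTwo.degreeLeTwo_cce {V : Type*} {A : V → V → Prop} (hA : IsTwoTwo A) :
    (CCE A).DegreeLeTwo := by
  rintro v a b c ⟨hav, ⟨xa, hva, hxa⟩, -⟩ ⟨hbv, ⟨xb, hvb, hxb⟩, -⟩ ⟨hcv, ⟨xc, hvc, hxc⟩, -⟩
  rcases hA.2.1 v xa xb xc hva hvb hvc with rfl | rfl | rfl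
  · exact Or.inl (hA.eq_of_common_outNeighbor hva hxa hxb hav.symm hbv.symm)
  · exact Or.inr (Or.inl (hA.eq_of_common_outNeighbor hva hxa hxc hav.symm hcv.symm))
  · exact Or.inr (Or.inr (hA.eq_of_common_outNeighbor hvb hxb hxc hbv.symm hcv.symm))

theorem stmt0 {V : Type} [Fintype V] (A : V → V → Prop) (hA : IsTwoTwo A) :
    (∀ v a b c, (CCE A).Adj v a → (CCE A).Adj v b → (CCE A).Adj v c →
      a = b ∨ a = c ∨ b = c) ∧
    (∀ c : (CCE A).ConnectedComponent,
      IsPathComponent (CCE A) c ∨ IsCycleComponent (CCE A) c) :=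
  ⟨hA.degreeLeTwo_cce, fun c =>
    (hA.degreeLeTwo_cce.induce c.supp).exists_iso_pathGraph_or_cycleGraph
      c.connected_toSimpleGraph⟩
end

section
/- For all positive integers m and n, the disjoint union of a path on m vertices and a path on n vertices is the CCE graph of some ⟨2,2⟩ digraph. -/
open SimpleGraph

/-! Number the vertices of `P_m ⊔ P_n` as `0, …, m + n - 1`, the first path before the second,
so that `P_m ⊔ P_n` becomes `P_{m+n}` with the edge `{m - 1, m}` removed. When `1 ≤ n ≤ m`, let
vertex `i < m` point to `i + n` and `i + n + 1`, and vertex `m + j` point to those of `n - j - 1`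
and `n - j` that lie on the first path. Every vertex then has at most two out- and two in-arcs,
and two vertices have both a common out-neighbour and a common in-neighbour exactly when they
are consecutive on the same path. -/

theorem IsTwoTwoCCE.of_iso {V W : Type*} {G : SimpleGraph V} {H : SimpleGraph W} (e : G ≃g H)
    (h : IsTwoTwoCCE H) : IsTwoTwoCCE G := by
  obtain ⟨X, A, hA, ⟨f⟩⟩ := h
  exact ⟨X, A, hA, ⟨e.trans f⟩⟩

theorem IsTwoTwo.isTwoTwoCCE_cce {W : Type} {A : W → W → Prop} (hA : IsTwoTwo A) :
    IsTwoTwoCCE (CCE A) :=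
  ⟨W, A, hA, ⟨Iso.refl⟩⟩

namespace SimpleGraph

def splitPathGraph (m n : ℕ) : SimpleGraph (Fin (m + n)) :=
  fromRel fun u v => (u : ℕ) + 1 = v ∧ (v : ℕ) ≠ m

theorem splitPathGraph_adj {m n : ℕ} {u v : Fin (m + n)} :
    (splitPathGraph m n).Adj u v ↔
      ((u : ℕ) + 1 = v ∧ (v : ℕ) ≠ m) ∨ ((v : ℕ) + 1 = u ∧ (u : ℕ) ≠ m) := by
  simp only [splitPathGraph, fromRel_adj, ne_eq, Fin.ext_iff]
  omega

def sumPathGraphIso (m n : ℕ) : pathGraph m ⊕g pathGraph n ≃g splitPathGraph m n where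
  toEquiv := finSumFinEquiv
  map_rel_iff' {a b} := by
    rcases a with i | i <;> rcases b with j | j <;>
      simp only [finSumFinEquiv_apply_left, finSumFinEquiv_apply_right,
        splitPathGraph_adj, Fin.val_castAdd, Fin.val_natAdd, sum_adj, pathGraph_adj, iff_false] <;>
      (have := i.isLt; have := j.isLt; omega)

end SimpleGraph

open SimpleGraph

def crossArc (m n : ℕ) (u v : Fin (m + n)) : Prop :=
  ((u : ℕ) < m ∧ ((v : ℕ) = u + n ∨ (v : ℕ) = u + n + 1)) ∨
    (m ≤ (u : ℕ) ∧ (v : ℕ) < m ∧ ((u : ℕ) + v = m + n ∨ (u : ℕ) + v + 1 = m + n))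

theorem isTwoTwo_crossArc {m n : ℕ} (hn : 1 ≤ n) : IsTwoTwo (crossArc m n) := by
  refine ⟨fun v hv => ?_, fun v a b c ha hb hc => ?_, fun v a b c ha hb hc => ?_⟩ <;>
    simp only [crossArc, Fin.ext_iff] at * <;> omega

section

variable {m n : ℕ} {u v : Fin (m + n)}

theorem exists_crossArc_common_out (hnm : n ≤ m) (huv : (u : ℕ) + 1 = v) (hv : (v : ℕ) ≠ m) :
    ∃ x, crossArc m n u x ∧ crossArc m n v x := by
  by_cases hvm : (v : ℕ) < m
  · refine ⟨⟨(u : ℕ) + n + 1, by omega⟩, ?_, ?_⟩ <;> unfold crossArc <;> dsimp only <;> omega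
  · refine ⟨⟨m + n - (v : ℕ), by omega⟩, ?_, ?_⟩ <;> unfold crossArc <;> dsimp only <;> omega

theorem exists_crossArc_common_in (hnm : n ≤ m) (huv : (u : ℕ) + 1 = v) (hv : (v : ℕ) ≠ m) :
    ∃ y, crossArc m n y u ∧ crossArc m n y v := by
  by_cases hun : n ≤ (u : ℕ)
  · refine ⟨⟨(u : ℕ) - n, by omega⟩, ?_, ?_⟩ <;> unfold crossArc <;> dsimp only <;> omega
  · refine ⟨⟨m + n - (v : ℕ), by omega⟩, ?_, ?_⟩ <;> unfold crossArc <;> dsimp only <;> omega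

end

theorem cce_crossArc {m n : ℕ} (hn : 1 ≤ n) (hnm : n ≤ m) :
    CCE (crossArc m n) = splitPathGraph m n := by
  have step : ∀ u v : Fin (m + n), (u : ℕ) + 1 = v → (v : ℕ) ≠ m → (CCE (crossArc m n)).Adj u v :=
    fun u v huv hv => ⟨Fin.ne_of_val_ne (by omega), exists_crossArc_common_out hnm huv hv,
      exists_crossArc_common_in hnm huv hv⟩
  ext u v
  refine ⟨fun ⟨hne, ⟨x, hux, hvx⟩, ⟨y, hyu, hyv⟩⟩ => ?_, fun h => ?_⟩
  · rw [splitPathGraph_adj]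
    simp only [crossArc, ne_eq, Fin.ext_iff] at *
    omega
  · rcases splitPathGraph_adj.1 h with ⟨huv, hv⟩ | ⟨hvu, hu⟩
    exacts [step u v huv hv, (step v u hvu hu).symm]

theorem stmt8 (m n : ℕ) (hm : 1 ≤ m) (hn : 1 ≤ n) :
    IsTwoTwoCCE (SimpleGraph.pathGraph m ⊕g SimpleGraph.pathGraph n) := by
  wlog hnm : n ≤ m generalizing m n
  · exact (this n m hn hm (by omega)).of_iso Iso.sumComm
  exact (cce_crossArc hn hnm ▸ (isTwoTwo_crossArc hn).isTwoTwoCCE_cce).of_iso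
    (sumPathGraphIso m n)
end

section
/- Let D be an acyclic ⟨2,2⟩ digraph (a (2,2) digraph) whose CCE graph is G. If C is a cycle in G, then D has no arc between any two vertices of C. -/
open SimpleGraph

/-!
If some vertex `x` of a cycle `C` of `CCE(D)` has an arc to a vertex `w` of `C`, then `x` has two
arcs into `C`: the two cycle neighbours `w₁, w₂` of `w` share in-neighbours `y₁, y₂` with `w`, and
since `w` has indegree at most 2, `x = y₁` or `x = y₂` (if `y₁ = y₂`, it would have outdegree 3).
Any CCE neighbour `y` of `x` shares an out-neighbour with `x`, which by the outdegree bound is one of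
these two arcs' heads; so `y` also has an arc into `C`. Propagating around `C`, every vertex of `C`
has an out-neighbour in `C`, which is impossible in a finite acyclic digraph.
-/

section

variable {V : Type*} {A : V → V → Prop}

lemma DigraphAcyclic.exists_sink_of_finite (hA : DigraphAcyclic A) {s : Set V} (hs : s.Finite)
    (hne : s.Nonempty) : ∃ m ∈ s, ∀ t ∈ s, ¬ A m t := by
  have : Finite s := hs.to_subtype
  let r : s → s → Prop := fun a b => Relation.TransGen A b a
  have : IsTrans s r := ⟨fun _ _ _ hab hbc => hbc.trans hab⟩
  have : Std.Irrefl r := ⟨fun a ha => hA a ha⟩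
  obtain ⟨m, -, hmin⟩ := (Finite.wellFounded_of_trans_of_irrefl r).has_min Set.univ
    ⟨⟨hne.some, hne.some_mem⟩, trivial⟩
  exact ⟨m, m.2, fun t ht hmt => hmin ⟨t, ht⟩ trivial (.single hmt)⟩

lemma SimpleGraph.Subgraph.Connected.forall_of_adj {G : SimpleGraph V} {H : G.Subgraph}
    (hH : H.Connected) {P : V → Prop} (hP : ∀ x y, H.Adj x y → P x → P y) {u : V}
    (hu : u ∈ H.verts) (h : P u) : ∀ x ∈ H.verts, P x := by
  have along_walk {a b : H.verts} (p : H.coe.Walk a b) : P a → P b := by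
    induction p with
    | nil => exact id
    | cons hab _ ih => exact fun ha => ih (hP _ _ hab ha)
  exact fun x hx => (hH.preconnected ⟨u, hu⟩ ⟨x, hx⟩).elim fun p => along_walk p h

lemma SimpleGraph.Walk.IsCycle.exists_adj_ne {G : SimpleGraph V} {u x : V} {c : G.Walk u u}
    (hc : c.IsCycle) (hx : x ∈ c.support) :
    ∃ a b, a ≠ b ∧ c.toSubgraph.Adj x a ∧ c.toSubgraph.Adj x b := by
  obtain ⟨a, b, hab, hN⟩ := Set.ncard_eq_two.mp (hc.ncard_neighborSet_toSubgraph_eq_two hx)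
  have ha : a ∈ c.toSubgraph.neighborSet x := hN ▸ Set.mem_insert a {b}
  have hb : b ∈ c.toSubgraph.neighborSet x := hN ▸ Set.mem_insert_of_mem a rfl
  exact ⟨a, b, hab, ha, hb⟩

namespace IsTwoTwo

lemma arc_or_arc_of_cce_adj (hA : IsTwoTwo A) {x w w₁ w₂ : V} (h₁ : (CCE A).Adj w w₁)
    (h₂ : (CCE A).Adj w w₂) (hne : w₁ ≠ w₂) (hxw : A x w) : A x w₁ ∨ A x w₂ := by
  obtain ⟨y₁, hy₁w, hy₁w₁⟩ := h₁.2.2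
  obtain ⟨y₂, hy₂w, hy₂w₂⟩ := h₂.2.2
  rcases hA.2.2 w y₁ y₂ x hy₁w hy₂w hxw with rfl | rfl | rfl
  · rcases hA.2.1 y₁ w w₁ w₂ hy₁w hy₁w₁ hy₂w₂ with h | h | h
    exacts [absurd h h₁.1, absurd h h₂.1, absurd h hne]
  · exact .inl hy₁w₁
  · exact .inr hy₂w₂

lemma arc_or_arc_of_cce_adj_left (hA : IsTwoTwo A) {x y a b : V} (hxy : (CCE A).Adj x y)
    (hab : a ≠ b) (hxa : A x a) (hxb : A x b) : A y a ∨ A y b := by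
  obtain ⟨z, hxz, hyz⟩ := hxy.2.1
  rcases hA.2.1 x z a b hxz hxa hxb with rfl | rfl | rfl
  exacts [.inl hyz, .inr hyz, absurd rfl hab]

lemma exists_arc_mem_support_of_adj (hA : IsTwoTwo A) {v : V} {c : (CCE A).Walk v v}
    (hc : c.IsCycle) {x y : V} (hxy : c.toSubgraph.Adj x y)
    (hx : ∃ t ∈ c.support, A x t) : ∃ t ∈ c.support, A y t := by
  obtain ⟨w, hw, hxw⟩ := hx
  obtain ⟨w₁, w₂, hne, h₁, h₂⟩ := hc.exists_adj_ne hw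
  have mem_support {a : V} (h : c.toSubgraph.Adj w a) : a ∈ c.support :=
    c.mem_verts_toSubgraph.mp h.snd_mem
  have two_arcs : ∃ a ∈ c.support, a ≠ w ∧ A x a := by
    rcases hA.arc_or_arc_of_cce_adj h₁.adj_sub h₂.adj_sub hne hxw with h | h
    exacts [⟨w₁, mem_support h₁, h₁.ne.symm, h⟩, ⟨w₂, mem_support h₂, h₂.ne.symm, h⟩]
  obtain ⟨a, ha, haw, hxa⟩ := two_arcs
  rcases hA.arc_or_arc_of_cce_adj_left hxy.adj_sub haw hxa hxw with h | h
  exacts [⟨a, ha, h⟩, ⟨w, hw, h⟩]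

end IsTwoTwo

end

theorem stmt14 {V : Type*} (A : V → V → Prop) (hA : IsTwoTwoAcyclic A) {v : V}
    (c : (CCE A).Walk v v) (hc : c.IsCycle) :
    ∀ u w, u ∈ c.support → w ∈ c.support → ¬ A u w := by
  intro u w hu hw huw
  have all_arc : ∀ x ∈ c.toSubgraph.verts, ∃ t ∈ c.support, A x t :=
    c.toSubgraph_connected.forall_of_adj
      (fun _ _ hxy => hA.1.exists_arc_mem_support_of_adj hc hxy)
      (c.mem_verts_toSubgraph.mpr hu) ⟨w, hw, huw⟩
  obtain ⟨m, hm, hsink⟩ :=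
    hA.2.exists_sink_of_finite (s := {x | x ∈ c.support}) c.support.finite_toSet ⟨u, hu⟩
  obtain ⟨t, ht, hmt⟩ := all_arc m (c.mem_verts_toSubgraph.mpr hm)
  exact hsink t ht hmt
end

section
/- Let D be a minimal (2,2) digraph realizing its CCE graph G. If a vertex v of D has exactly one in-neighbor, then v has degree exactly 1 in G. -/
open SimpleGraph

/-!
Let `u` be the only in-neighbour of `v`. Then `u` is the common in-neighbour of `v` and each of
its CCE-neighbours, so these are out-neighbours of `u` other than `v`; outdegree at most 2 leaves
room for only one. If `v` had no CCE-neighbour, the arc `u → v` would witness no CCE edge at all,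
so deleting it would not change the CCE graph, contradicting minimality.
-/

section

variable {V : Type*} {A : V → V → Prop}

def deleteArc (A : V → V → Prop) (u v : V) : V → V → Prop :=
  fun a b => A a b ∧ ¬(a = u ∧ b = v)

lemma MinimalTwoTwoAcyclic.cce_deleteArc_ne
    (hA : MinimalTwoTwoAcyclic A) {u v : V} (huv : A u v) :
    CCE (deleteArc A u v) ≠ CCE A :=
  fun h => (hA.2 _ (fun _ _ hab => hab.1) h u v huv).2 ⟨rfl, rfl⟩

lemma cce_deleteArc_le (A : V → V → Prop) (u v : V) :
    CCE (deleteArc A u v) ≤ CCE A := by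
  rintro a b ⟨hne, ⟨x, hax, hbx⟩, ⟨y, hya, hyb⟩⟩
  exact ⟨hne, ⟨x, hax.1, hbx.1⟩, ⟨y, hya.1, hyb.1⟩⟩

lemma cce_deleteArc_eq_of_isolated {u v : V}
    (hv : ∀ b, A b v → b = u) (hiso : ∀ w, ¬(CCE A).Adj v w) :
    CCE (deleteArc A u v) = CCE A := by
  refine le_antisymm (cce_deleteArc_le A u v) ?_
  intro a b hab
  have ⟨hne, ⟨x, hax, hbx⟩, ⟨y, hya, hyb⟩⟩ := hab
  refine ⟨hne, ⟨x, ⟨hax, ?_⟩, ⟨hbx, ?_⟩⟩, ⟨y, ⟨hya, ?_⟩, ⟨hyb, ?_⟩⟩⟩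
  · rintro ⟨rfl, rfl⟩
    exact hne (hv b hbx).symm
  · rintro ⟨rfl, rfl⟩
    exact hne (hv a hax)
  · rintro ⟨rfl, rfl⟩
    exact hiso b hab
  · rintro ⟨rfl, rfl⟩
    exact hiso a hab.symm

lemma IsTwoTwo.cce_adj_eq_of_unique_inNeighbor
    (hA : IsTwoTwo A) {u v : V} (huv : A u v) (hv : ∀ b, A b v → b = u) {w₁ w₂ : V}
    (h₁ : (CCE A).Adj v w₁) (h₂ : (CCE A).Adj v w₂) : w₁ = w₂ := by
  have arc_of_adj : ∀ {w}, (CCE A).Adj v w → A u w := by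
    rintro w ⟨-, -, ⟨y, hyv, hyw⟩⟩
    rwa [hv y hyv] at hyw
  rcases hA.2.1 u v w₁ w₂ huv (arc_of_adj h₁) (arc_of_adj h₂) with h | h | h
  · exact absurd h h₁.ne
  · exact absurd h h₂.ne
  · exact h

end

theorem stmt17 {V : Type*} (A : V → V → Prop) (hA : MinimalTwoTwoAcyclic A)
    (v : V) (hin : ∃! u, A u v) :
    ∃! w, (CCE A).Adj v w := by
  obtain ⟨u, huv, hv⟩ := hin
  refine existsUnique_of_exists_of_unique ?_ ?_
  · by_contra! hiso
    exact hA.cce_deleteArc_ne huv (cce_deleteArc_eq_of_isolated hv hiso)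
  · exact fun _ _ => hA.1.1.cce_adj_eq_of_unique_inNeighbor huv hv
end
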